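/- Suppose Φ(z) = Σ_{n=0}^∞ d_n u_n(z) with u_n(z) = z^n F^(n)(z) for F = ₁F₁(α;γ;-εz), and Φ satisfies the single-confluent Heun equation with parameters (q; α, γ, δ, ε). Then R_n d_n + Q_{n-1} d_{n-1} + P_{n-2} d_{n-2} = 0 with R_n = εn(n+α-1), Q_n = n(n+ε+γ+δ-1) + εα - q, P_n = n+δ. -/

import Mathlib

open PowerSeries Finset

/-- The Pochhammer symbol `(a)_k = a(a+1)⋯(a+k-1)`. -/
noncomputable def poch (a : ℂ) (k : ℕ) : ℂ := (ascPochhammer ℂ k).eval a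

/-- The Kummer series `₁F₁(α; γ; -εz)` as a formal power series in `z`. -/
noncomputable def kummerNeg (α γ ε : ℂ) : PowerSeries ℂ :=
  PowerSeries.mk fun k => poch α k * (-ε) ^ k / (poch γ k * (k.factorial : ℂ))

/-- `u_n(z) = z^n (dⁿ/dzⁿ) ₁F₁(α; γ; -εz)` as a formal power series. -/
noncomputable def kummerU (α γ ε : ℂ) (n : ℕ) : PowerSeries ℂ :=
  X ^ n * (fun f => derivative ℂ f)^[n] (kummerNeg α γ ε)

/-!
Write `A_k` for the coefficients of `₁F₁(α; γ; -εz)` and `k^(n)` for the falling factorial, so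
that `u_n` has coefficients `k^(n) A_k` and `Φ` has coefficients `S_k A_k` with
`S_k = Σ_n d_n k^(n)`. Kummer's recurrence `(k+1)(γ+k) A_{k+1} = -ε(α+k) A_k` lets one divide
the `k`-th coefficient of the Heun operator applied to `Φ` by `A_k ≠ 0`, which leaves a
second-order difference operator acting on `S`. On falling factorials this operator is
tridiagonal, `k^(n) ↦ R_n k^(n-1) + Q_n k^(n) + P_n k^(n+1)`: this is the coefficientwise form of
`L u_n = R_n u_{n-1} + Q_n u_n + P_n u_{n+1}`. Collecting terms, the Heun equation says
`Σ_m G_m k^(m) = 0` for every `k`, where `G_m` is the left-hand side of the recurrence, and since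
`k^(m)` vanishes for `m > k` and equals `k!` for `m = k`, every `G_m` is zero.
-/

lemma cast_descFactorial_succ {R : Type*} [Ring R] (k n : ℕ) :
    (k.descFactorial (n + 1) : R) = k.descFactorial n * ((k : R) - n) := by
  rw [← descPochhammer_eval_eq_descFactorial R, descPochhammer_succ_eval,
    descPochhammer_eval_eq_descFactorial]

lemma cast_mul_descFactorial_pred {R : Type*} [Semiring R] (k n : ℕ) :
    (k : R) * (k - 1).descFactorial n = k.descFactorial (n + 1) := by
  cases k with
  | zero => simp
  | succ j => rw [Nat.succ_descFactorial_succ]; simp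

lemma eq_zero_of_forall_sum_mul_descFactorial_eq_zero {R : Type*} [Ring R] [NoZeroDivisors R]
    [CharZero R] {g : ℕ → R} (h : ∀ k, ∑ m ∈ range (k + 1), g m * k.descFactorial m = 0)
    (m : ℕ) : g m = 0 := by
  induction m using Nat.strong_induction_on with
  | _ m ih =>
    have hm := h m
    rw [sum_range_succ, sum_eq_zero fun i hi => by rw [ih i (mem_range.1 hi), zero_mul],
      zero_add, Nat.descFactorial_self] at hm
    exact (mul_eq_zero.1 hm).resolve_right (Nat.cast_ne_zero.2 m.factorial_ne_zero)

def threeTermResidual {R : Type*} [Semiring R] (r q p d : ℕ → R) : ℕ → R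
  | 0 => r 1 * d 1 + q 0 * d 0
  | m + 1 => r (m + 2) * d (m + 2) + q (m + 1) * d (m + 1) + p m * d m

lemma sum_mul_threeTerm_eq_sum_threeTermResidual_mul {R : Type*} [CommSemiring R]
    (r q p d f : ℕ → R) (hr : r 0 = 0) (k : ℕ) (h₁ : f (k + 1) = 0) (h₂ : f (k + 2) = 0) :
    ∑ n ∈ range (k + 2), d n * (r n * f (n - 1) + q n * f n + p n * f (n + 1))
      = ∑ m ∈ range (k + 1), threeTermResidual r q p d m * f m := by
  simp only [mul_add, mul_left_comm (d _), sum_add_distrib]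
  rw [sum_range_succ' _ (k + 1), sum_range_succ' _ k, sum_range_succ _ (k + 1),
    sum_range_succ' _ k, sum_range_succ _ (k + 1), sum_range_succ _ k, sum_range_succ' _ k]
  simp only [threeTermResidual, hr, h₁, h₂, add_mul, mul_assoc, sum_add_distrib,
    Nat.add_sub_cancel, zero_add, mul_zero, zero_mul, add_zero]
  ring

lemma coeff_X_pow_mul_iterate_derivative {R : Type*} [CommSemiring R] (f : R⟦X⟧) (n k : ℕ) :
    coeff k (X ^ n * (d⁄dX R)^[n] f) = k.descFactorial n * coeff k f := by
  rw [coeff_X_pow_mul']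
  split_ifs with h
  · obtain ⟨j, rfl⟩ := Nat.exists_eq_add_of_le' h
    rw [coeff_iterate_derivative, Nat.add_sub_cancel, Nat.add_descFactorial_eq_ascFactorial]
  · rw [Nat.descFactorial_eq_zero_iff_lt.2 (by omega), Nat.cast_zero, zero_mul]

lemma coeff_X_mul_derivative {R : Type*} [CommSemiring R] (f : R⟦X⟧) (k : ℕ) :
    coeff k (X * d⁄dX R f) = k * coeff k f := by
  cases k with
  | zero => rw [coeff_zero_X_mul, Nat.cast_zero, zero_mul]
  | succ k => rw [coeff_succ_X_mul, coeff_derivative, mul_comm, Nat.cast_succ]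

lemma poch_ne_zero {x : ℂ} (hx : ∀ m : ℕ, x ≠ -m) (k : ℕ) : poch x k ≠ 0 := by
  rw [poch, Ne, ascPochhammer_eval_eq_zero_iff]
  rintro ⟨m, -, hm⟩
  exact hx m (by rw [hm, neg_neg])

section Heun

variable {q α γ δ ε : ℂ}

lemma coeff_kummerU (n k : ℕ) :
    coeff k (kummerU α γ ε n) = k.descFactorial n * coeff k (kummerNeg α γ ε) :=
  coeff_X_pow_mul_iterate_derivative _ n k

lemma coeff_kummerNeg_ne_zero (hε : ε ≠ 0) (hγ : ∀ m : ℕ, γ ≠ -m) (hα : ∀ m : ℕ, α ≠ -m)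
    (k : ℕ) : coeff k (kummerNeg α γ ε) ≠ 0 := by
  rw [kummerNeg, coeff_mk]
  exact div_ne_zero (mul_ne_zero (poch_ne_zero hα k) (pow_ne_zero _ (neg_ne_zero.2 hε)))
    (mul_ne_zero (poch_ne_zero hγ k) (Nat.cast_ne_zero.2 k.factorial_ne_zero))

lemma coeff_succ_kummerNeg_mul (hγ : ∀ m : ℕ, γ ≠ -m) (k : ℕ) :
    coeff (k + 1) (kummerNeg α γ ε) * ((k + 1) * (γ + k))
      = -ε * (α + k) * coeff k (kummerNeg α γ ε) := by
  have hpoch := poch_ne_zero hγ k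
  have hγk : γ + k ≠ 0 := fun h => hγ k (eq_neg_of_add_eq_zero_left h)
  have hfact := k.factorial_ne_zero
  simp only [kummerNeg, coeff_mk, poch, ascPochhammer_succ_eval, Nat.factorial_succ, pow_succ]
  push_cast
  field_simp

noncomputable def heunOp (q α γ δ ε : ℂ) (f : ℂ⟦X⟧) : ℂ⟦X⟧ :=
  X * (X - 1) * derivative ℂ (derivative ℂ f)
    + (C ε * X * (X - 1) + C γ * (X - 1) + C δ * X) * derivative ℂ f
    + (C (ε * α) * X - C q) * f

-- The factor `k` makes the truncated `k - 1` harmless at `k = 0`.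
def reducedHeunOp (q α γ δ ε : ℂ) (s : ℕ → ℂ) (k : ℕ) : ℂ :=
  ε * (α + k) * s (k + 1) + (k * (k - 1) + (γ + δ - ε) * k - q) * s k
    - (γ + k - 1) * (k * s (k - 1))

lemma coeff_heunOp_eq_mul (hγ : ∀ m : ℕ, γ ≠ -m) {f : ℂ⟦X⟧} {s : ℕ → ℂ}
    (hf : ∀ j, coeff j f = s j * coeff j (kummerNeg α γ ε)) (k : ℕ) :
    coeff k (heunOp q α γ δ ε f) = reducedHeunOp q α γ δ ε s k * coeff k (kummerNeg α γ ε) := by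
  have hexpand : heunOp q α γ δ ε f = X * (X * d⁄dX ℂ (d⁄dX ℂ f)) - X * d⁄dX ℂ (d⁄dX ℂ f)
      + C ε * (X * (X * d⁄dX ℂ f)) - C ε * (X * d⁄dX ℂ f) + C γ * (X * d⁄dX ℂ f)
      - C γ * d⁄dX ℂ f + C δ * (X * d⁄dX ℂ f) + C (ε * α) * (X * f) - C q * f := by
    rw [heunOp]; ring
  rw [hexpand]
  cases k with
  | zero =>
    simp only [map_add, map_sub, coeff_C_mul, coeff_zero_X_mul, coeff_derivative, hf,
      reducedHeunOp]
    push_cast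
    linear_combination -s 1 * coeff_succ_kummerNeg_mul (ε := ε) (α := α) hγ 0
  | succ k =>
    simp only [map_add, map_sub, coeff_C_mul, coeff_succ_X_mul, coeff_X_mul_derivative,
      coeff_derivative, hf, reducedHeunOp, Nat.add_sub_cancel]
    have h₁ := coeff_succ_kummerNeg_mul (ε := ε) (α := α) hγ (k + 1)
    have h₀ := coeff_succ_kummerNeg_mul (ε := ε) (α := α) hγ k
    push_cast at h₁ ⊢
    linear_combination -s (k + 2) * h₁ + s k * h₀

lemma reducedHeunOp_descFactorial (n k : ℕ) :
    reducedHeunOp q α γ δ ε (fun j => j.descFactorial n) k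
      = ε * n * (n + α - 1) * k.descFactorial (n - 1)
        + (n * (n + ε + γ + δ - 1) + ε * α - q) * k.descFactorial n
        + (n + δ) * k.descFactorial (n + 1) := by
  simp only [reducedHeunOp]
  rw [cast_mul_descFactorial_pred]
  cases n with
  | zero =>
    simp only [zero_add, Nat.descFactorial_zero, Nat.descFactorial_one, Nat.zero_sub, Nat.cast_one,
      Nat.cast_zero]
    ring
  | succ m =>
    have hshift : ((k + 1).descFactorial (m + 1) : ℂ) = (k + 1) * k.descFactorial m := by
      rw [Nat.succ_descFactorial_succ]; push_cast; ring
    rw [Nat.add_sub_cancel, hshift, cast_descFactorial_succ k (m + 1),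
      cast_descFactorial_succ k m]
    push_cast
    ring

lemma sum_range_mul_descFactorial_eq {d : ℕ → ℂ} {j N : ℕ} (h : j < N) :
    ∑ n ∈ range (j + 1), d n * j.descFactorial n = ∑ n ∈ range N, d n * j.descFactorial n := by
  refine sum_subset (range_subset_range.2 h) fun n hN hj => ?_
  rw [Nat.descFactorial_eq_zero_iff_lt.2 (by simp at hN hj; omega), Nat.cast_zero, mul_zero]

lemma reducedHeunOp_partialSums (d : ℕ → ℂ) (k : ℕ) :
    reducedHeunOp q α γ δ ε (fun j => ∑ n ∈ range (j + 1), d n * j.descFactorial n) k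
      = ∑ n ∈ range (k + 2), d n * reducedHeunOp q α γ δ ε (fun j => j.descFactorial n) k := by
  simp only [reducedHeunOp]
  rw [sum_range_mul_descFactorial_eq (N := k + 2) (by omega),
    sum_range_mul_descFactorial_eq (j := k) (N := k + 2) (by omega),
    sum_range_mul_descFactorial_eq (j := k - 1) (N := k + 2) (by omega)]
  simp only [mul_sum, ← sum_add_distrib, ← sum_sub_distrib]
  exact sum_congr rfl fun n _ => by ring

end Heun

/-- Suppose `Φ = Σ_{n≥0} d_n u_n` (a well-defined formal series since
`u_n` has order `≥ n`) satisfies the single-confluent Heun equation with parameters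
`(q; α, γ, δ, ε)` (stated with denominators cleared by `z(z-1)`). Then
`R_n d_n + Q_{n-1} d_{n-1} + P_{n-2} d_{n-2} = 0` with `R_n = εn(n+α-1)`,
`Q_n = n(n+ε+γ+δ-1) + εα - q`, `P_n = n+δ`. -/
theorem confluent_heun_expansion_kummerU_recurrence
    (q α γ δ ε : ℂ) (hε : ε ≠ 0)
    (hγ : ∀ m : ℕ, γ ≠ -(m : ℂ)) (hα : ∀ m : ℕ, α ≠ -(m : ℂ))
    (d : ℕ → ℂ) (Φ : PowerSeries ℂ)
    (hΦ : Φ = PowerSeries.mk fun k =>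
      ∑ n ∈ Finset.range (k + 1), d n * PowerSeries.coeff k (kummerU α γ ε n))
    (hheun : X * (X - 1) * derivative ℂ (derivative ℂ Φ)
      + (C ε * X * (X - 1) + C γ * (X - 1) + C δ * X) * derivative ℂ Φ
      + (C (ε * α) * X - C q) * Φ = 0)
    (R Q P : ℕ → ℂ)
    (hR : ∀ n : ℕ, R n = ε * n * (n + α - 1))
    (hQ : ∀ n : ℕ, Q n = n * (n + ε + γ + δ - 1) + ε * α - q)
    (hP : ∀ n : ℕ, P n = n + δ) :
    R 1 * d 1 + Q 0 * d 0 = 0 ∧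
      ∀ n : ℕ, R (n + 2) * d (n + 2) + Q (n + 1) * d (n + 1) + P n * d n = 0 := by
  have hcoeff (j : ℕ) : coeff j Φ
      = (∑ n ∈ range (j + 1), d n * j.descFactorial n) * coeff j (kummerNeg α γ ε) := by
    rw [hΦ, coeff_mk, sum_mul]
    exact sum_congr rfl fun n _ => by rw [coeff_kummerU, mul_assoc]
  have hresidual (k : ℕ) :
      ∑ m ∈ range (k + 1), threeTermResidual R Q P d m * k.descFactorial m = 0 := by
    have hk := congrArg (coeff k) (show heunOp q α γ δ ε Φ = 0 from hheun)
    rw [coeff_heunOp_eq_mul hγ hcoeff, map_zero,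
      mul_eq_zero_iff_right (coeff_kummerNeg_ne_zero hε hγ hα k),
      reducedHeunOp_partialSums] at hk
    simp only [reducedHeunOp_descFactorial, ← hR, ← hQ, ← hP] at hk
    rwa [sum_mul_threeTerm_eq_sum_threeTermResidual_mul R Q P d
      (fun m => (k.descFactorial m : ℂ)) (by simp [hR]) k (by simp) (by simp)] at hk
  have hzero := eq_zero_of_forall_sum_mul_descFactorial_eq_zero hresidual
  exact ⟨hzero 0, fun n => hzero (n + 1)⟩
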